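/- arXiv:2310.06483 — 6 statements merged into one kernel-verified Lean document; each statement's English description precedes it below -/
import Mathlib

section
/- Let H be a real inner product space, n ≥ 1, w, w* ∈ H, η > 0, and let g : Fin n → H → ℝ and u : Fin n → H satisfy, for every i and every v ∈ H, g i v ≥ g i w + ⟪u i, v − w⟫. Set L v = (1/n)·Σ_i g i v, ū = (1/n)·Σ_i u i, and V = (1/n)·Σ_i ‖u i − ū‖². Then (1/n)·Σ_i ‖(w − η•(u i)) − w*‖² − ‖w − w*‖² ≤ −2η·(L w − L w*) + η²·(V + ‖ū‖²). (Per-step expected form of the paper's Lemma 2, with expectation over a uniformly sampled buffer index made explicit as a finite average, and the second moment decomposed into variance plus squared mean.) -/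
/-!
Expanding the square, the averaged step equals
`‖w - w*‖² - 2η⟪ū, w - w*⟫ + η² · (1/n) Σ ‖u i‖²`. The second moment splits as `V + ‖ū‖²`,
and summing the subgradient inequalities at `w*` shows that `ū` is a subgradient of `L` at `w`,
so `L w - L w* ≤ ⟪ū, w - w*⟫`; since `η > 0` this bounds the middle term.
-/

open scoped RealInnerProductSpace BigOperators

open Finset

section
variable {ι H : Type*} [NormedAddCommGroup H] [InnerProductSpace ℝ H] (s : Finset ι)

lemma sum_norm_sub_sq (v : ι → H) (m : H) :
    ∑ i ∈ s, ‖v i - m‖ ^ 2 = ∑ i ∈ s, ‖v i‖ ^ 2 - 2 * ⟪∑ i ∈ s, v i, m⟫ + #s * ‖m‖ ^ 2 := by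
  simp only [norm_sub_sq_real, sum_add_distrib, sum_sub_distrib, sum_inner, ← mul_sum,
    sum_const, nsmul_eq_mul]

lemma sum_norm_sq_eq_sum_norm_sub_sq_add {v : ι → H} {m : H}
    (hm : (#s : ℝ) • m = ∑ i ∈ s, v i) :
    ∑ i ∈ s, ‖v i‖ ^ 2 = ∑ i ∈ s, ‖v i - m‖ ^ 2 + #s * ‖m‖ ^ 2 := by
  rw [sum_norm_sub_sq, ← hm, real_inner_smul_left, real_inner_self_eq_norm_sq]
  ring

lemma sum_norm_sub_smul_sq (u : ι → H) (a : H) (η : ℝ) :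
    ∑ i ∈ s, ‖a - η • u i‖ ^ 2 =
      #s * ‖a‖ ^ 2 - 2 * η * ⟪∑ i ∈ s, u i, a⟫ + η ^ 2 * ∑ i ∈ s, ‖u i‖ ^ 2 := by
  simp only [norm_sub_rev a, sum_norm_sub_sq, ← smul_sum, real_inner_smul_left, norm_smul,
    mul_pow, Real.norm_eq_abs, sq_abs, ← mul_sum]
  ring

lemma sum_sub_sum_le_inner_of_subgradient {g : ι → H → ℝ} {u : ι → H} {w : H}
    (hsub : ∀ i ∈ s, ∀ v, g i w + ⟪u i, v - w⟫ ≤ g i v) (v : H) :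
    ∑ i ∈ s, g i w - ∑ i ∈ s, g i v ≤ ⟪∑ i ∈ s, u i, w - v⟫ := by
  rw [← neg_sub v w, inner_neg_right, sum_inner, ← sum_sub_distrib, ← sum_neg_distrib]
  exact sum_le_sum fun i hi => by linarith [hsub i hi v]

end

/-- Per-step expected form of the paper's Lemma 2, with the expectation over a
uniformly sampled buffer index made explicit as a finite average, and the second
moment decomposed into variance plus squared mean. -/
theorem ogd_one_step_expected
    {H : Type*} [NormedAddCommGroup H] [InnerProductSpace ℝ H]
    (n : ℕ) (hn : 1 ≤ n) (w wstar : H) (η : ℝ) (hη : 0 < η)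
    (g : Fin n → H → ℝ) (u : Fin n → H)
    (hsub : ∀ (i : Fin n) (v : H), g i v ≥ g i w + ⟪u i, v - w⟫)
    (L : H → ℝ) (hL : ∀ v, L v = (1 / (n : ℝ)) * ∑ i, g i v)
    (ubar : H) (hu : ubar = (1 / (n : ℝ)) • ∑ i, u i)
    (V : ℝ) (hV : V = (1 / (n : ℝ)) * ∑ i, ‖u i - ubar‖ ^ 2) :
    (1 / (n : ℝ)) * ∑ i, ‖(w - η • u i) - wstar‖ ^ 2 - ‖w - wstar‖ ^ 2 ≤
      -2 * η * (L w - L wstar) + η ^ 2 * (V + ‖ubar‖ ^ 2) := by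
  have hn0 : (n : ℝ) ≠ 0 := Nat.cast_ne_zero.2 (Nat.one_le_iff_ne_zero.1 hn)
  have hmean : (#(univ : Finset (Fin n)) : ℝ) • ubar = ∑ i, u i := by
    rw [card_fin, hu, smul_smul, mul_one_div_cancel hn0, one_smul]
  have hconv := sum_sub_sum_le_inner_of_subgradient univ (fun i _ v => hsub i v) wstar
  have hsecond := sum_norm_sq_eq_sum_norm_sub_sq_add univ hmean
  simp only [sub_right_comm w, sum_norm_sub_smul_sq, hsecond, ← hmean, card_fin,
    real_inner_smul_left, hL, hV] at hconv ⊢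
  field_simp
  linarith [mul_le_mul_of_nonneg_left hconv (by positivity : (0 : ℝ) ≤ 2 * η)]
end

section
/- Let H be a real inner product space, M > 0, 0 < η ≤ 1/M, n ≥ 1, and w, w* ∈ H. Let g : Fin n → H → ℝ and u : Fin n → H satisfy, for every i and v, g i v ≥ g i w + ⟪u i, v − w⟫. Set L v = (1/n)·Σ_i g i v and ū = (1/n)·Σ_i u i, and assume L and a map G : H → H satisfy: for all a, b ∈ H, L b ≤ L a + ⟪G a, b − a⟫ + (M/2)·‖b − a‖², with G w = ū. Then (1/n)·Σ_i L (w − η•(u i)) − L w* ≤ (‖w − w*‖² − (1/n)·Σ_i ‖(w − η•(u i)) − w*‖²)/(2η) + η·(1/n)·Σ_i ‖u i − ū‖². (Per-step inequality in the paper's proof of Theorem 5: combining the convexity step and the smooth descent step, with step size η ≤ 1/M, the second-moment term reduces to the variance of the stochastic gradient.) -/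
open scoped RealInnerProductSpace BigOperators

/-!
Averaging the subgradient inequalities at `w` gives `L w - L w* ≤ ⟪ū, w - w*⟫`, and the smoothness
bound at `w` with `η M ≤ 1` gives `L (w - η uᵢ) ≤ L w - η ⟪ū, uᵢ⟫ + (η/2) ‖uᵢ‖²`. Expanding
`‖(w - η uᵢ) - w*‖²` turns `⟪ū, w - w*⟫` into the distance difference plus `(η/2)` times the second
moment of the `uᵢ`; what is left is `η` times the second moment minus `η ‖ū‖²`, i.e. `η` times the
empirical variance.
-/

section Mean

variable {H : Type*} [NormedAddCommGroup H] [InnerProductSpace ℝ H] {n : ℕ}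

lemma mean_const (hn : n ≠ 0) (c : ℝ) : (1 / (n : ℝ)) * ∑ _i : Fin n, c = c := by
  simp only [Finset.sum_const, Finset.card_univ, Fintype.card_fin, nsmul_eq_mul]
  field_simp

lemma mean_inner_right (x : H) (v : Fin n → H) :
    (1 / (n : ℝ)) * ∑ i, ⟪x, v i⟫ = ⟪x, (1 / (n : ℝ)) • ∑ i, v i⟫ := by
  rw [real_inner_smul_right, inner_sum]

lemma mean_inner_left (v : Fin n → H) (x : H) :
    (1 / (n : ℝ)) * ∑ i, ⟪v i, x⟫ = ⟪(1 / (n : ℝ)) • ∑ i, v i, x⟫ := by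
  rw [real_inner_smul_left, sum_inner]

lemma mean_norm_sub_mean_sq (hn : n ≠ 0) (v : Fin n → H) :
    (1 / (n : ℝ)) * ∑ i, ‖v i - (1 / (n : ℝ)) • ∑ j, v j‖ ^ 2
      = (1 / (n : ℝ)) * ∑ i, ‖v i‖ ^ 2 - ‖(1 / (n : ℝ)) • ∑ j, v j‖ ^ 2 := by
  simp only [norm_sub_sq_real, Finset.sum_add_distrib, Finset.sum_sub_distrib, mul_add, mul_sub,
    ← Finset.mul_sum, mul_left_comm (1 / (n : ℝ)) 2, mean_inner_left, mean_const hn,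
    real_inner_self_eq_norm_sq]
  ring

lemma mean_norm_sub_smul_sub_sq (hn : n ≠ 0) (v : Fin n → H) (w z : H) (η : ℝ) :
    (1 / (n : ℝ)) * ∑ i, ‖(w - η • v i) - z‖ ^ 2
      = ‖w - z‖ ^ 2 - 2 * η * ⟪(1 / (n : ℝ)) • ∑ i, v i, w - z⟫
        + η ^ 2 * ((1 / (n : ℝ)) * ∑ i, ‖v i‖ ^ 2) := by
  have hexpand : ∀ i, ‖(w - η • v i) - z‖ ^ 2
      = ‖w - z‖ ^ 2 - 2 * η * ⟪v i, w - z⟫ + η ^ 2 * ‖v i‖ ^ 2 := fun i => by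
    rw [sub_right_comm, norm_sub_sq_real, real_inner_smul_right, norm_smul, mul_pow,
      Real.norm_eq_abs, sq_abs, real_inner_comm]
    ring
  simp only [hexpand, Finset.sum_add_distrib, Finset.sum_sub_distrib, mul_add, mul_sub,
    ← Finset.mul_sum, mul_left_comm (1 / (n : ℝ)), mean_inner_left, mean_const hn]

lemma mean_add_inner_le_mean {w : H} {g : Fin n → H → ℝ} {u : Fin n → H}
    (hsub : ∀ i v, g i w + ⟪u i, v - w⟫ ≤ g i v) (v : H) :
    (1 / (n : ℝ)) * ∑ i, g i w + ⟪(1 / (n : ℝ)) • ∑ i, u i, v - w⟫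
      ≤ (1 / (n : ℝ)) * ∑ i, g i v := by
  rw [← mean_inner_left, ← mul_add, ← Finset.sum_add_distrib]
  gcongr with i
  exact hsub i v

lemma apply_sub_smul_le_of_smooth {L : H → ℝ} {w G : H} {M η : ℝ}
    (hsmooth : ∀ b, L b ≤ L w + ⟪G, b - w⟫ + (M / 2) * ‖b - w‖ ^ 2)
    (hη : 0 ≤ η) (hMη : M * η ≤ 1) (x : H) :
    L (w - η • x) ≤ L w - η * ⟪G, x⟫ + (η / 2) * ‖x‖ ^ 2 := by
  have hstep := hsmooth (w - η • x)
  rw [sub_sub_cancel_left, inner_neg_right, real_inner_smul_right, norm_neg, norm_smul, mul_pow,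
    Real.norm_eq_abs, sq_abs] at hstep
  have hquad : (M / 2) * (η ^ 2 * ‖x‖ ^ 2) ≤ (η / 2) * ‖x‖ ^ 2 := by
    nlinarith [mul_nonneg (mul_nonneg hη (sub_nonneg.2 hMη)) (sq_nonneg ‖x‖)]
  linarith

lemma mean_apply_sub_smul_le (hn : n ≠ 0) {L : H → ℝ} {w : H} {u : Fin n → H} {M η : ℝ}
    (hsmooth : ∀ b, L b ≤ L w + ⟪(1 / (n : ℝ)) • ∑ i, u i, b - w⟫ + (M / 2) * ‖b - w‖ ^ 2)
    (hη : 0 ≤ η) (hMη : M * η ≤ 1) :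
    (1 / (n : ℝ)) * ∑ i, L (w - η • u i)
      ≤ L w - η * ‖(1 / (n : ℝ)) • ∑ i, u i‖ ^ 2 + (η / 2) * ((1 / (n : ℝ)) * ∑ i, ‖u i‖ ^ 2) := by
  calc (1 / (n : ℝ)) * ∑ i, L (w - η • u i)
      ≤ (1 / (n : ℝ)) * ∑ i, (L w - η * ⟪(1 / (n : ℝ)) • ∑ j, u j, u i⟫ + (η / 2) * ‖u i‖ ^ 2) := by
        gcongr with i
        exact apply_sub_smul_le_of_smooth hsmooth hη hMη (u i)
    _ = _ := by
        simp only [Finset.sum_add_distrib, Finset.sum_sub_distrib, mul_add, mul_sub,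
          ← Finset.mul_sum, mul_left_comm (1 / (n : ℝ)), mean_inner_right, mean_const hn,
          real_inner_self_eq_norm_sq]

end Mean

theorem per_step_variance_inequality_general
    {H : Type*} [NormedAddCommGroup H] [InnerProductSpace ℝ H]
    (M : ℝ) (η : ℝ) (hη : 0 < η) (hηM : η ≤ 1 / M)
    (n : ℕ) (hn : 1 ≤ n) (w wstar : H)
    (g : Fin n → H → ℝ) (u : Fin n → H)
    (hsub : ∀ (i : Fin n) (v : H), g i v ≥ g i w + ⟪u i, v - w⟫)
    (L : H → ℝ) (hL : ∀ v, L v = (1 / (n : ℝ)) * ∑ i, g i v)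
    (ubar : H) (hu : ubar = (1 / (n : ℝ)) • ∑ i, u i)
    (G : H → H)
    (hsmooth : ∀ a b : H, L b ≤ L a + ⟪G a, b - a⟫ + (M / 2) * ‖b - a‖ ^ 2)
    (hGw : G w = ubar) :
    (1 / (n : ℝ)) * ∑ i, L (w - η • u i) - L wstar ≤
      (‖w - wstar‖ ^ 2 - (1 / (n : ℝ)) * ∑ i, ‖(w - η • u i) - wstar‖ ^ 2) / (2 * η)
        + η * ((1 / (n : ℝ)) * ∑ i, ‖u i - ubar‖ ^ 2) := by
  have hn0 : n ≠ 0 := Nat.one_le_iff_ne_zero.1 hn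
  have hM : 0 < M := one_div_pos.1 (hη.trans_le hηM)
  have hMη : M * η ≤ 1 := by rwa [le_div_iff₀ hM, mul_comm] at hηM
  subst hu
  have hconv : L w - L wstar ≤ ⟪(1 / (n : ℝ)) • ∑ i, u i, w - wstar⟫ := by
    have hmean := mean_add_inner_le_mean hsub wstar
    rw [← hL, ← hL, ← neg_sub, inner_neg_right] at hmean
    linarith
  have hdesc := mean_apply_sub_smul_le hn0 (hGw ▸ hsmooth w) hη.le hMη
  have hdist : (‖w - wstar‖ ^ 2 - (1 / (n : ℝ)) * ∑ i, ‖(w - η • u i) - wstar‖ ^ 2) / (2 * η)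
      = ⟪(1 / (n : ℝ)) • ∑ i, u i, w - wstar⟫
        - (η / 2) * ((1 / (n : ℝ)) * ∑ i, ‖u i‖ ^ 2) := by
    rw [mean_norm_sub_smul_sub_sq hn0]
    field_simp
    ring
  rw [hdist, mean_norm_sub_mean_sq hn0]
  linarith

/-- Per-step inequality in the paper's proof of Theorem 5: combining the convexity
step and the smooth descent step, with step size `η ≤ 1/M`, the second-moment term
reduces to the variance of the stochastic gradient. -/
theorem per_step_variance_inequality
    {H : Type*} [NormedAddCommGroup H] [InnerProductSpace ℝ H]
    (M : ℝ) (hM : 0 < M) (η : ℝ) (hη : 0 < η) (hηM : η ≤ 1 / M)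
    (n : ℕ) (hn : 1 ≤ n) (w wstar : H)
    (g : Fin n → H → ℝ) (u : Fin n → H)
    (hsub : ∀ (i : Fin n) (v : H), g i v ≥ g i w + ⟪u i, v - w⟫)
    (L : H → ℝ) (hL : ∀ v, L v = (1 / (n : ℝ)) * ∑ i, g i v)
    (ubar : H) (hu : ubar = (1 / (n : ℝ)) • ∑ i, u i)
    (G : H → H)
    (hsmooth : ∀ a b : H, L b ≤ L a + ⟪G a, b - a⟫ + (M / 2) * ‖b - a‖ ^ 2)
    (hGw : G w = ubar) :
    (1 / (n : ℝ)) * ∑ i, L (w - η • u i) - L wstar ≤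
      (‖w - wstar‖ ^ 2 - (1 / (n : ℝ)) * ∑ i, ‖(w - η • u i) - wstar‖ ^ 2) / (2 * η)
        + η * ((1 / (n : ℝ)) * ∑ i, ‖u i - ubar‖ ^ 2) :=
  per_step_variance_inequality_general M η hη hηM n hn w wstar g u hsub L hL ubar hu G hsmooth hGw
end

section
/- Let H be a real inner product space, M > 0, 0 < η ≤ 1/M, T ≥ 1, w* ∈ H, and for each t ∈ Fin T let n t ≥ 1, g t : Fin (n t) → H → ℝ, u t : H → Fin (n t) → H, and G t : H → H satisfy: (i) for all w, i, v: g t i v ≥ g t i w + ⟪u t w i, v − w⟫; (ii) with L t w = (1/(n t))·Σ_i g t i w, for all a, b: L t b ≤ L t a + ⟪G t a, b − a⟫ + (M/2)·‖b − a‖²; (iii) for all w: (1/(n t))·Σ_i u t w i = G t w. Let Ω = Π_{t} Fin (n t) with the uniform average, and define W σ 0 = 0 and W σ (t+1) = W σ t − η•(u t (W σ t) (σ t)). Then (1/|Ω|)·Σ_{σ∈Ω} Σ_{t} (L t (W σ (t+1)) − L t w*) ≤ ‖w*‖²/(2η) + η·(1/|Ω|)·Σ_{σ∈Ω} Σ_{t}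 V t σ, where V t σ = (1/(n t))·Σ_i ‖u t (W σ t) i − G t (W σ t)‖². (Paper's Theorem 5: with convex, M-smooth local losses, unbiased buffer gradients, and step size η ∈ (0, 1/M], buffer-based online gradient descent achieves expected regret at most ‖w̄*‖²/(2η) plus η times the sum of the stochastic-gradient variances.) -/
open scoped RealInnerProductSpace BigOperators

/-!
Along every sample path, one step of gradient descent with a stochastic direction `d` in place of
the gradient `g` satisfies, by convexity, `M`-smoothness and `Mη ≤ 1`,
`L(w - η d) - L(w*) ≤ (‖w - w*‖² - ‖w - η d - w*‖²)/(2η) + η‖d - g‖² + ⟪d - g, η g + w* - w⟫`.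
The distance terms telescope to at most `‖w*‖²/(2η)`. The iterate at step `t` does not depend on
the buffer index drawn at step `t`, so averaging over that index replaces `d` by the buffer mean:
the last term has mean zero (unbiasedness) and `‖d - g‖²` has mean the buffer variance.
-/

open Finset Function

theorem Fin.sum_univ_castSucc_sub_succ {M : Type*} [AddCommGroup M] {T : ℕ}
    (f : Fin (T + 1) → M) :
    ∑ t : Fin T, (f t.castSucc - f t.succ) = f 0 - f (Fin.last T) := by
  induction T with
  | zero => simp
  | succ T ih =>
    rw [Fin.sum_univ_castSucc]
    simp only [Fin.succ_castSucc]
    rw [ih (fun t => f t.castSucc)]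
    simp

section Sampling

variable {ι : Type*} [Fintype ι] [DecidableEq ι] {β : ι → Type*} [∀ i, Fintype (β i)]

theorem card_nsmul_sum_eval_of_update_invariant {M : Type*} [AddCommMonoid M] (t : ι)
    (Φ : (∀ i, β i) → β t → M) (hΦ : ∀ σ j k, Φ (update σ t j) k = Φ σ k) :
    Fintype.card (β t) • ∑ σ, Φ σ (σ t) = ∑ σ, ∑ j, Φ σ j := by
  -- `(σ, j) ↦ (σ[t ↦ j], σ t)` swaps the sampled coordinate with the free one.
  let e : (∀ i, β i) × β t → (∀ i, β i) × β t := fun p => (update p.1 t p.2, p.1 t)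
  have he : Involutive e := fun p => by simp [e]
  calc Fintype.card (β t) • ∑ σ, Φ σ (σ t) = ∑ p : (∀ i, β i) × β t, Φ p.1 (p.1 t) := by
        simp [Fintype.sum_prod_type, Finset.smul_sum]
    _ = ∑ p : (∀ i, β i) × β t, Φ p.1 p.2 :=
        Fintype.sum_bijective e he.bijective _ _ fun p => by simp [e, hΦ]
    _ = ∑ σ, ∑ j, Φ σ j := Fintype.sum_prod_type _

theorem sum_eval_eq_sum_average_of_update_invariant {X : Type*} (t : ι) (w : (∀ i, β i) → X)
    (hw : ∀ σ j, w (update σ t j) = w σ) (ψ : X → β t → ℝ) :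
    ∑ σ, ψ (w σ) (σ t) = ∑ σ, 1 / (Fintype.card (β t) : ℝ) * ∑ j, ψ (w σ) j := by
  rcases isEmpty_or_nonempty (β t) with hβ | hβ
  · have : IsEmpty (∀ i, β i) := isEmpty_pi.mpr ⟨t, hβ⟩
    simp
  · rw [← Finset.mul_sum, ← card_nsmul_sum_eval_of_update_invariant t (fun σ => ψ (w σ))
      fun σ j _ => by rw [hw], nsmul_eq_mul, one_div, inv_mul_cancel_left₀ (by positivity)]

theorem sum_inner_sample_sub_mean_eq_zero {H X : Type*} [NormedAddCommGroup H]
    [InnerProductSpace ℝ H] (t : ι) (w : (∀ i, β i) → X) (hw : ∀ σ j, w (update σ t j) = w σ)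
    (d : X → β t → H) (G v : X → H)
    (hG : ∀ x, (1 / (Fintype.card (β t) : ℝ)) • ∑ j, d x j = G x) :
    ∑ σ, ⟪d (w σ) (σ t) - G (w σ), v (w σ)⟫ = 0 := by
  rw [sum_eval_eq_sum_average_of_update_invariant t w hw fun x j => ⟪d x j - G x, v x⟫]
  refine sum_eq_zero fun σ _ => ?_
  have : Nonempty (β t) := ⟨σ t⟩
  have hcard : (Fintype.card (β t) : ℝ) ≠ 0 := Nat.cast_ne_zero.mpr Fintype.card_ne_zero
  rw [← sum_inner, ← real_inner_smul_left, sum_sub_distrib, smul_sub, hG, sum_const, card_univ,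
    ← Nat.cast_smul_eq_nsmul ℝ, smul_smul, one_div, inv_mul_cancel₀ hcard, one_smul, sub_self,
    inner_zero_left]

end Sampling

theorem iterate_castSucc_update {T : ℕ} {β : Fin T → Type*} {X : Type*} [∀ t, DecidableEq (β t)]
    (x₀ : X) (F : (t : Fin T) → X → β t → X) (W : (∀ t, β t) → Fin (T + 1) → X)
    (hW0 : ∀ σ, W σ 0 = x₀) (hWsucc : ∀ σ t, W σ t.succ = F t (W σ t.castSucc) (σ t))
    (t : Fin T) (σ : ∀ t, β t) (j : β t) :
    W (update σ t j) t.castSucc = W σ t.castSucc := by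
  suffices ∀ r : Fin (T + 1), r ≤ t.castSucc → W (update σ t j) r = W σ r from this _ le_rfl
  intro r
  induction r using Fin.induction with
  | zero => simp [hW0]
  | succ s ih =>
    intro hs
    have hst : s ≠ t := by rintro rfl; exact absurd hs (by simp)
    rw [hWsucc, hWsucc, update_of_ne hst, ih ((Fin.castSucc_le_succ s).trans hs)]

section GradientDescent

variable {H : Type*} [NormedAddCommGroup H] [InnerProductSpace ℝ H]

theorem mul_sum_add_inner_le_of_subgradient {ι : Type*} [Fintype ι] {f : ι → H → ℝ}
    {d : ι → H} {w v : H} (h : ∀ i, f i w + ⟪d i, v - w⟫ ≤ f i v) {c : ℝ} (hc : 0 ≤ c) :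
    c * ∑ i, f i w + ⟪c • ∑ i, d i, v - w⟫ ≤ c * ∑ i, f i v := by
  rw [real_inner_smul_left, sum_inner, ← mul_add, ← sum_add_distrib]
  gcongr with i
  exact h i

theorem gd_step_sub_le {L : H → ℝ} {M η : ℝ} (hη : 0 < η) (hMη : M * η ≤ 1) {w wstar d g : H}
    (hconv : L w + ⟪g, wstar - w⟫ ≤ L wstar)
    (hsmooth : L (w - η • d) ≤ L w + ⟪g, w - η • d - w⟫ + M / 2 * ‖w - η • d - w‖ ^ 2) :
    L (w - η • d) - L wstar ≤ (‖w - wstar‖ ^ 2 - ‖w - η • d - wstar‖ ^ 2) / (2 * η)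
      + η * ‖d - g‖ ^ 2 + ⟪d - g, η • g + (wstar - w)⟫ := by
  have hdist : (‖w - wstar‖ ^ 2 - ‖w - η • d - wstar‖ ^ 2) / (2 * η)
      = ⟪d, w - wstar⟫ - η / 2 * ‖d‖ ^ 2 := by
    rw [show w - η • d - wstar = (w - wstar) - η • d by abel, norm_sub_sq_real (w - wstar),
      real_inner_smul_right, norm_smul, Real.norm_eq_abs, abs_of_pos hη, real_inner_comm]
    field_simp
    ring
  have hdisp : w - η • d - w = -(η • d) := by abel
  rw [hdisp, inner_neg_right, real_inner_smul_right, norm_neg, norm_smul, Real.norm_eq_abs,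
    abs_of_pos hη] at hsmooth
  have hnoise : ⟪d - g, η • g + (wstar - w)⟫
      = η * ⟪d, g⟫ - η * ‖g‖ ^ 2 - ⟪d, w - wstar⟫ + ⟪g, w - wstar⟫ := by
    rw [← neg_sub w wstar]
    simp only [inner_sub_left, inner_add_right, inner_neg_right, real_inner_smul_right,
      real_inner_self_eq_norm_sq]
    ring
  have hconv' : ⟪g, wstar - w⟫ = -⟪g, w - wstar⟫ := by rw [← inner_neg_right, neg_sub]
  have hcurv : M * η * (η * ‖d‖ ^ 2) ≤ η * ‖d‖ ^ 2 := mul_le_of_le_one_left (by positivity) hMη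
  rw [hdist, hnoise, norm_sub_sq_real, real_inner_comm g d]
  linarith

theorem gd_regret_le {T : ℕ} {L : Fin T → H → ℝ} {G : Fin T → H → H} {M η : ℝ} (hη : 0 < η)
    (hMη : M * η ≤ 1) (hconv : ∀ t w v, L t w + ⟪G t w, v - w⟫ ≤ L t v)
    (hsmooth : ∀ t a b, L t b ≤ L t a + ⟪G t a, b - a⟫ + M / 2 * ‖b - a‖ ^ 2)
    {d : Fin T → H} {w : Fin (T + 1) → H} (hw : ∀ t, w t.succ = w t.castSucc - η • d t)
    (wstar : H) :
    ∑ t, (L t (w t.succ) - L t wstar) ≤ ‖w 0 - wstar‖ ^ 2 / (2 * η) +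
      ∑ t, (η * ‖d t - G t (w t.castSucc)‖ ^ 2 +
        ⟪d t - G t (w t.castSucc), η • G t (w t.castSucc) + (wstar - w t.castSucc)⟫) := by
  calc ∑ t, (L t (w t.succ) - L t wstar)
      ≤ ∑ t, ((‖w t.castSucc - wstar‖ ^ 2 - ‖w t.succ - wstar‖ ^ 2) / (2 * η) +
          (η * ‖d t - G t (w t.castSucc)‖ ^ 2 +
            ⟪d t - G t (w t.castSucc), η • G t (w t.castSucc) + (wstar - w t.castSucc)⟫)) := by
        gcongr with t
        rw [hw, ← add_assoc]
        exact gd_step_sub_le hη hMη (hconv t _ wstar) (hsmooth t _ _)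
    _ ≤ _ := by
        rw [sum_add_distrib, ← sum_div,
          Fin.sum_univ_castSucc_sub_succ (fun t => ‖w t - wstar‖ ^ 2)]
        gcongr
        exact sub_le_self _ (sq_nonneg _)

end GradientDescent

theorem buffer_ogd_regret_variance_general
    {H : Type*} [NormedAddCommGroup H] [InnerProductSpace ℝ H]
    (M : ℝ) (η : ℝ) (hη : 0 < η) (hηM : η ≤ 1 / M)
    (T : ℕ) (wstar : H)
    (n : Fin T → ℕ)
    (g : (t : Fin T) → Fin (n t) → H → ℝ)
    (u : (t : Fin T) → H → Fin (n t) → H)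
    (G : Fin T → H → H)
    (hsub : ∀ (t : Fin T) (w : H) (i : Fin (n t)) (v : H),
      g t i v ≥ g t i w + ⟪u t w i, v - w⟫)
    (L : Fin T → H → ℝ)
    (hL : ∀ t w, L t w = (1 / (n t : ℝ)) * ∑ i, g t i w)
    (hsmooth : ∀ (t : Fin T) (a b : H),
      L t b ≤ L t a + ⟪G t a, b - a⟫ + (M / 2) * ‖b - a‖ ^ 2)
    (hunbiased : ∀ (t : Fin T) (w : H), (1 / (n t : ℝ)) • ∑ i, u t w i = G t w)
    (W : ((t : Fin T) → Fin (n t)) → Fin (T + 1) → H)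
    (hW0 : ∀ σ, W σ 0 = 0)
    (hWsucc : ∀ (σ : (t : Fin T) → Fin (n t)) (t : Fin T),
      W σ t.succ = W σ t.castSucc - η • u t (W σ t.castSucc) (σ t))
    (V : Fin T → ((t : Fin T) → Fin (n t)) → ℝ)
    (hV : ∀ t σ, V t σ =
      (1 / (n t : ℝ)) * ∑ i, ‖u t (W σ t.castSucc) i - G t (W σ t.castSucc)‖ ^ 2) :
    (1 / (Fintype.card ((t : Fin T) → Fin (n t)) : ℝ)) *
        ∑ σ : (t : Fin T) → Fin (n t), ∑ t : Fin T,
          (L t (W σ t.succ) - L t wstar) ≤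
      ‖wstar‖ ^ 2 / (2 * η) +
        η * ((1 / (Fintype.card ((t : Fin T) → Fin (n t)) : ℝ)) *
          ∑ σ : (t : Fin T) → Fin (n t), ∑ t : Fin T, V t σ) := by
  rcases isEmpty_or_nonempty ((t : Fin T) → Fin (n t)) with hΩ | hΩ
  · -- an empty buffer leaves no sample paths
    simp only [univ_eq_empty, sum_empty, mul_zero, add_zero]
    positivity
  have hMη : M * η ≤ 1 := by
    rcases le_or_gt M 0 with hM | hM
    · nlinarith
    · rwa [le_div_iff₀ hM, mul_comm] at hηM
  have hconv t w v : L t w + ⟪G t w, v - w⟫ ≤ L t v := by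
    simpa only [hL, ← hunbiased] using
      mul_sum_add_inner_le_of_subgradient (fun i => hsub t w i v) (c := 1 / (n t : ℝ))
        (by positivity)
  have hpred t := iterate_castSucc_update 0 (fun t w j => w - η • u t w j) W hW0 hWsucc t
  have hnoise t := sum_inner_sample_sub_mean_eq_zero t (fun σ => W σ t.castSucc) (hpred t) (u t)
    (G t) (fun w => η • G t w + (wstar - w)) (by simpa only [Fintype.card_fin] using hunbiased t)
  have hvar t : ∑ σ, ‖u t (W σ t.castSucc) (σ t) - G t (W σ t.castSucc)‖ ^ 2 = ∑ σ, V t σ := by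
    rw [sum_eval_eq_sum_average_of_update_invariant t (fun σ => W σ t.castSucc) (hpred t)
      fun w j => ‖u t w j - G t w‖ ^ 2]
    simp only [Fintype.card_fin, hV]
  have hpath σ := by
    simpa only [hW0, zero_sub, norm_neg] using
      gd_regret_le hη hMη hconv hsmooth (hWsucc σ) wstar
  have hcard : (Fintype.card ((t : Fin T) → Fin (n t)) : ℝ) ≠ 0 :=
    Nat.cast_ne_zero.mpr Fintype.card_ne_zero
  refine (mul_le_mul_of_nonneg_left (sum_le_sum fun σ _ => hpath σ) (by positivity)).trans_eq ?_
  rw [sum_add_distrib, sum_const, card_univ, sum_comm]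
  simp only [sum_add_distrib, hnoise, ← mul_sum, hvar, add_zero]
  rw [sum_comm (γ := Fin T), nsmul_eq_mul]
  field_simp

/-- Paper's Theorem 5: with convex, `M`-smooth local losses, unbiased buffer
gradients, and step size `η ∈ (0, 1/M]`, buffer-based online gradient descent
achieves expected regret at most `‖w*‖²/(2η)` plus `η` times the sum of the
stochastic-gradient variances.  Expectations over the independent uniform buffer
samples are encoded as the uniform average over the finite product sample space
`Ω = Π t, Fin (n t)`. -/
theorem buffer_ogd_regret_variance
    {H : Type*} [NormedAddCommGroup H] [InnerProductSpace ℝ H]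
    (M : ℝ) (hM : 0 < M) (η : ℝ) (hη : 0 < η) (hηM : η ≤ 1 / M)
    (T : ℕ) (hT : 1 ≤ T) (wstar : H)
    (n : Fin T → ℕ) (hn : ∀ t, 1 ≤ n t)
    (g : (t : Fin T) → Fin (n t) → H → ℝ)
    (u : (t : Fin T) → H → Fin (n t) → H)
    (G : Fin T → H → H)
    (hsub : ∀ (t : Fin T) (w : H) (i : Fin (n t)) (v : H),
      g t i v ≥ g t i w + ⟪u t w i, v - w⟫)
    (L : Fin T → H → ℝ)
    (hL : ∀ t w, L t w = (1 / (n t : ℝ)) * ∑ i, g t i w)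
    (hsmooth : ∀ (t : Fin T) (a b : H),
      L t b ≤ L t a + ⟪G t a, b - a⟫ + (M / 2) * ‖b - a‖ ^ 2)
    (hunbiased : ∀ (t : Fin T) (w : H), (1 / (n t : ℝ)) • ∑ i, u t w i = G t w)
    (W : ((t : Fin T) → Fin (n t)) → Fin (T + 1) → H)
    (hW0 : ∀ σ, W σ 0 = 0)
    (hWsucc : ∀ (σ : (t : Fin T) → Fin (n t)) (t : Fin T),
      W σ t.succ = W σ t.castSucc - η • u t (W σ t.castSucc) (σ t))
    (V : Fin T → ((t : Fin T) → Fin (n t)) → ℝ)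
    (hV : ∀ t σ, V t σ =
      (1 / (n t : ℝ)) * ∑ i, ‖u t (W σ t.castSucc) i - G t (W σ t.castSucc)‖ ^ 2) :
    (1 / (Fintype.card ((t : Fin T) → Fin (n t)) : ℝ)) *
        ∑ σ : (t : Fin T) → Fin (n t), ∑ t : Fin T,
          (L t (W σ t.succ) - L t wstar) ≤
      ‖wstar‖ ^ 2 / (2 * η) +
        η * ((1 / (Fintype.card ((t : Fin T) → Fin (n t)) : ℝ)) *
          ∑ σ : (t : Fin T) → Fin (n t), ∑ t : Fin T, V t σ) :=
  buffer_ogd_regret_variance_general M η hη hηM T wstar n g u G hsub L hL hsmooth hunbiased W hW0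
    hWsucc V hV
end

section
/- Let E and F be real inner product spaces, M ≥ 0, and let g : E → F satisfy ‖g x − g y‖ ≤ M·‖x − y‖ for all x, y. Let n ≥ 1, x : Fin n → E, and let π : Fin n → Fin k be a cluster assignment with every cluster C j = {i | π i = j} nonempty, n j = |C j|, cluster centroids c j = (1/n j)·Σ_{i∈C j} x i, and per-cluster gradient means ν j = (1/n j)·Σ_{i∈C j} g (x i). Then Σ_j (n j / n)²·(1/n j)·Σ_{i∈C j} ‖g (x i) − ν j‖² ≤ Σ_j (n j·M² / n²)·Σ_{i∈C j} ‖x i − c j‖². (Paper's Equation (6): the variance of the stratified gradient estimator is upper bounded, via M-smoothness of the loss, by a weighted sum of within-cluster squared distances of the inputs to their centroids — the clustering objective minimized by online stratified sampling.) -/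
/-!
Within one cluster, the gradients' mean minimizes their sum of squared deviations, so replacing it
by the gradient at the input centroid can only increase that sum; the `M`-Lipschitz bound then
compares each deviation `g (x i) - g (c j)` with `x i - c j`. The cluster weights
`(n j / n)² · (1 / n j) = n j / n²` are the same on both sides.
-/

open scoped RealInnerProductSpace

section Mean

variable {ι F : Type*} [NormedAddCommGroup F] [InnerProductSpace ℝ F]

-- For `s = ∅` both sides vanish, despite the junk value `1 / 0 = 0`.
lemma Finset.card_smul_one_div_card_smul_sum (s : Finset ι) (v : ι → F) :
    (s.card : ℝ) • ((1 / (s.card : ℝ)) • ∑ i ∈ s, v i) = ∑ i ∈ s, v i := by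
  rcases s.eq_empty_or_nonempty with rfl | hs
  · simp
  · rw [smul_smul, mul_one_div_cancel (by positivity), one_smul]

lemma Finset.sum_sub_mean_eq_zero (s : Finset ι) (v : ι → F) :
    ∑ i ∈ s, (v i - (1 / (s.card : ℝ)) • ∑ i ∈ s, v i) = 0 := by
  rw [Finset.sum_sub_distrib, Finset.sum_const, ← Nat.cast_smul_eq_nsmul ℝ,
    s.card_smul_one_div_card_smul_sum, sub_self]

lemma Finset.sum_norm_sub_sq_eq_sum_norm_sub_mean_sq_add (s : Finset ι) (v : ι → F) (a : F) :
    ∑ i ∈ s, ‖v i - a‖ ^ 2 = ∑ i ∈ s, ‖v i - (1 / (s.card : ℝ)) • ∑ i ∈ s, v i‖ ^ 2 +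
      s.card * ‖(1 / (s.card : ℝ)) • ∑ i ∈ s, v i - a‖ ^ 2 := by
  set μ : F := (1 / (s.card : ℝ)) • ∑ i ∈ s, v i
  have hsplit : ∀ i ∈ s, ‖v i - a‖ ^ 2 = ‖v i - μ‖ ^ 2 + 2 * ⟪v i - μ, μ - a⟫ + ‖μ - a‖ ^ 2 := by
    intro i _
    rw [← norm_add_sq_real, sub_add_sub_cancel]
  rw [Finset.sum_congr rfl hsplit, Finset.sum_add_distrib, Finset.sum_add_distrib,
    ← Finset.mul_sum, ← sum_inner, s.sum_sub_mean_eq_zero, inner_zero_left, mul_zero, add_zero,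
    Finset.sum_const, nsmul_eq_mul]

lemma Finset.sum_norm_sub_mean_sq_le (s : Finset ι) (v : ι → F) (a : F) :
    ∑ i ∈ s, ‖v i - (1 / (s.card : ℝ)) • ∑ i ∈ s, v i‖ ^ 2 ≤ ∑ i ∈ s, ‖v i - a‖ ^ 2 := by
  rw [s.sum_norm_sub_sq_eq_sum_norm_sub_mean_sq_add v a]
  exact le_add_of_nonneg_right (by positivity)

lemma Finset.sum_norm_sub_mean_sq_le_of_lipschitz {E : Type*} [NormedAddCommGroup E]
    [InnerProductSpace ℝ E] {M : ℝ} {g : E → F} (hg : ∀ x y : E, ‖g x - g y‖ ≤ M * ‖x - y‖)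
    (s : Finset ι) (x : ι → E) :
    ∑ i ∈ s, ‖g (x i) - (1 / (s.card : ℝ)) • ∑ i ∈ s, g (x i)‖ ^ 2 ≤
      M ^ 2 * ∑ i ∈ s, ‖x i - (1 / (s.card : ℝ)) • ∑ i ∈ s, x i‖ ^ 2 := by
  set c : E := (1 / (s.card : ℝ)) • ∑ i ∈ s, x i
  calc ∑ i ∈ s, ‖g (x i) - (1 / (s.card : ℝ)) • ∑ i ∈ s, g (x i)‖ ^ 2
      ≤ ∑ i ∈ s, ‖g (x i) - g c‖ ^ 2 := s.sum_norm_sub_mean_sq_le (g ∘ x) (g c)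
    _ ≤ ∑ i ∈ s, M ^ 2 * ‖x i - c‖ ^ 2 := by
      gcongr with i
      rw [← mul_pow]
      exact pow_le_pow_left₀ (norm_nonneg _) (hg (x i) c) 2
    _ = M ^ 2 * ∑ i ∈ s, ‖x i - c‖ ^ 2 := (Finset.mul_sum _ _ _).symm

end Mean

theorem stratified_variance_clustering_bound_general
    {E F : Type*} [NormedAddCommGroup E] [InnerProductSpace ℝ E]
    [NormedAddCommGroup F] [InnerProductSpace ℝ F]
    (M : ℝ) (g : E → F)
    (hg : ∀ x y : E, ‖g x - g y‖ ≤ M * ‖x - y‖)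
    (n k : ℕ) (x : Fin n → E) (π : Fin n → Fin k)
    (nc : Fin k → ℕ)
    (hnc : ∀ j, nc j = (Finset.univ.filter (fun i : Fin n => π i = j)).card)
    (c : Fin k → E)
    (hc : ∀ j, c j = (1 / (nc j : ℝ)) •
      ∑ i ∈ Finset.univ.filter (fun i : Fin n => π i = j), x i)
    (ν : Fin k → F)
    (hν : ∀ j, ν j = (1 / (nc j : ℝ)) •
      ∑ i ∈ Finset.univ.filter (fun i : Fin n => π i = j), g (x i)) :
    ∑ j : Fin k, ((nc j : ℝ) / (n : ℝ)) ^ 2 *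
        ((1 / (nc j : ℝ)) *
          ∑ i ∈ Finset.univ.filter (fun i : Fin n => π i = j), ‖g (x i) - ν j‖ ^ 2) ≤
      ∑ j : Fin k, ((nc j : ℝ) * M ^ 2 / (n : ℝ) ^ 2) *
        ∑ i ∈ Finset.univ.filter (fun i : Fin n => π i = j), ‖x i - c j‖ ^ 2 := by
  refine Finset.sum_le_sum fun j _ => ?_
  have hweight : ((nc j : ℝ) / n) ^ 2 * (1 / (nc j : ℝ)) = nc j / (n : ℝ) ^ 2 := by
    rcases eq_or_ne (nc j : ℝ) 0 with h | h
    · simp [h]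
    · field_simp
  have hcluster := Finset.sum_norm_sub_mean_sq_le_of_lipschitz hg
    (Finset.univ.filter (fun i : Fin n => π i = j)) x
  rw [← hnc, ← hν, ← hc] at hcluster
  calc _ = (nc j : ℝ) / (n : ℝ) ^ 2 *
          ∑ i ∈ Finset.univ.filter (fun i : Fin n => π i = j), ‖g (x i) - ν j‖ ^ 2 := by
        rw [← hweight, mul_assoc]
    _ ≤ (nc j : ℝ) / (n : ℝ) ^ 2 *
          (M ^ 2 * ∑ i ∈ Finset.univ.filter (fun i : Fin n => π i = j), ‖x i - c j‖ ^ 2) := by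
        gcongr
    _ = _ := by ring

/-- Paper's Equation (6): the variance of the stratified gradient estimator is upper
bounded, via `M`-smoothness of the loss, by a weighted sum of within-cluster squared
distances of the inputs to their centroids — the clustering objective minimized by
online stratified sampling. -/
theorem stratified_variance_clustering_bound
    {E F : Type*} [NormedAddCommGroup E] [InnerProductSpace ℝ E]
    [NormedAddCommGroup F] [InnerProductSpace ℝ F]
    (M : ℝ) (hM : 0 ≤ M) (g : E → F)
    (hg : ∀ x y : E, ‖g x - g y‖ ≤ M * ‖x - y‖)
    (n k : ℕ) (hn : 1 ≤ n) (x : Fin n → E) (π : Fin n → Fin k)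
    (hne : ∀ j : Fin k, ∃ i : Fin n, π i = j)
    (nc : Fin k → ℕ)
    (hnc : ∀ j, nc j = (Finset.univ.filter (fun i : Fin n => π i = j)).card)
    (c : Fin k → E)
    (hc : ∀ j, c j = (1 / (nc j : ℝ)) •
      ∑ i ∈ Finset.univ.filter (fun i : Fin n => π i = j), x i)
    (ν : Fin k → F)
    (hν : ∀ j, ν j = (1 / (nc j : ℝ)) •
      ∑ i ∈ Finset.univ.filter (fun i : Fin n => π i = j), g (x i)) :
    ∑ j : Fin k, ((nc j : ℝ) / (n : ℝ)) ^ 2 *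
        ((1 / (nc j : ℝ)) *
          ∑ i ∈ Finset.univ.filter (fun i : Fin n => π i = j), ‖g (x i) - ν j‖ ^ 2) ≤
      ∑ j : Fin k, ((nc j : ℝ) * M ^ 2 / (n : ℝ) ^ 2) *
        ∑ i ∈ Finset.univ.filter (fun i : Fin n => π i = j), ‖x i - c j‖ ^ 2 :=
  stratified_variance_clustering_bound_general M g hg n k x π nc hnc c hc ν hν
end

section
/- Let H be a real inner product space, M ≥ 0, f : H → ℝ, G : H → H, and w* ∈ H such that for all a, b ∈ H, f b ≤ f a + ⟪G a, b − a⟫ + (M/2)·‖b − a‖², and G w* = 0. Let P be a finite index set, a : P → ℝ, and v, v̂ : P → H with ‖v̂ p − v p‖ ≤ δ for all p ∈ P, where δ ≥ 0. If w* = Σ_p (a p)•(v p) and w̄* = Σ_p (a p)•(v̂ p), then f w̄* − f w* ≤ (M/2)·(Σ_p |a p|)²·δ². (Deterministic core of the paper's Theorem 8: if the optimal kernel expansion w* is a stationary point of an M-smooth loss and each kernel section is perturbed by at most δ, then the loss of the perturbed expansion w̄* exceeds the optimum by at most (M/2)·‖w*‖₁²·δ².) -/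
open scoped RealInnerProductSpace BigOperators

theorem norm_sum_smul_le_sum_abs_mul {E ι : Type*} [SeminormedAddCommGroup E] [NormedSpace ℝ E]
    (s : Finset ι) (a : ι → ℝ) (u : ι → E) {δ : ℝ} (hu : ∀ i ∈ s, ‖u i‖ ≤ δ) :
    ‖∑ i ∈ s, a i • u i‖ ≤ (∑ i ∈ s, |a i|) * δ :=
  calc ‖∑ i ∈ s, a i • u i‖ ≤ ∑ i ∈ s, ‖a i • u i‖ := norm_sum_le _ _
    _ ≤ ∑ i ∈ s, |a i| * δ := Finset.sum_le_sum fun i hi => by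
        rw [norm_smul, Real.norm_eq_abs]
        exact mul_le_mul_of_nonneg_left (hu i hi) (abs_nonneg _)
    _ = (∑ i ∈ s, |a i|) * δ := (Finset.sum_mul _ _ _).symm

theorem sub_le_of_quadratic_upper_bound_of_stationary {H : Type*} [NormedAddCommGroup H]
    [InnerProductSpace ℝ H] {M : ℝ} (hM : 0 ≤ M) {f : H → ℝ} {G : H → H} {w b : H} {r : ℝ}
    (hsmooth : f b ≤ f w + ⟪G w, b - w⟫ + (M / 2) * ‖b - w‖ ^ 2) (hstat : G w = 0)
    (hr : ‖b - w‖ ≤ r) :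
    f b - f w ≤ (M / 2) * r ^ 2 := by
  rw [hstat, inner_zero_left, add_zero] at hsmooth
  have hsq : ‖b - w‖ ^ 2 ≤ r ^ 2 := pow_le_pow_left₀ (norm_nonneg _) hr 2
  nlinarith

theorem perturbed_expansion_excess_loss_general
    {H : Type*} [NormedAddCommGroup H] [InnerProductSpace ℝ H]
    (M : ℝ) (hM : 0 ≤ M) (f : H → ℝ) (G : H → H) (wstar : H)
    (hsmooth : ∀ a b : H, f b ≤ f a + ⟪G a, b - a⟫ + (M / 2) * ‖b - a‖ ^ 2)
    (hstat : G wstar = 0)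
    {P : Type*} [Fintype P] (a : P → ℝ) (v vhat : P → H)
    (δ : ℝ) (herr : ∀ p : P, ‖vhat p - v p‖ ≤ δ)
    (hwstar : wstar = ∑ p : P, a p • v p)
    (wbar : H) (hwbar : wbar = ∑ p : P, a p • vhat p) :
    f wbar - f wstar ≤ (M / 2) * (∑ p : P, |a p|) ^ 2 * δ ^ 2 := by
  have hdiff : wbar - wstar = ∑ p : P, a p • (vhat p - v p) := by
    simp only [hwbar, hwstar, smul_sub, Finset.sum_sub_distrib]
  have hdist : ‖wbar - wstar‖ ≤ (∑ p : P, |a p|) * δ :=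
    hdiff ▸ norm_sum_smul_le_sum_abs_mul _ a _ fun p _ => herr p
  rw [mul_assoc, ← mul_pow]
  exact sub_le_of_quadratic_upper_bound_of_stationary hM (hsmooth wstar wbar) hstat hdist

/-- Deterministic core of the paper's Theorem 8: if the optimal kernel expansion
`w*` is a stationary point of an `M`-smooth loss and each kernel section is
perturbed by at most `δ`, then the loss of the perturbed expansion `w̄*` exceeds the
optimum by at most `(M/2)·‖w*‖₁²·δ²`. -/
theorem perturbed_expansion_excess_loss
    {H : Type*} [NormedAddCommGroup H] [InnerProductSpace ℝ H]
    (M : ℝ) (hM : 0 ≤ M) (f : H → ℝ) (G : H → H) (wstar : H)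
    (hsmooth : ∀ a b : H, f b ≤ f a + ⟪G a, b - a⟫ + (M / 2) * ‖b - a‖ ^ 2)
    (hstat : G wstar = 0)
    {P : Type*} [Fintype P] (a : P → ℝ) (v vhat : P → H)
    (δ : ℝ) (hδ : 0 ≤ δ) (herr : ∀ p : P, ‖vhat p - v p‖ ≤ δ)
    (hwstar : wstar = ∑ p : P, a p • v p)
    (wbar : H) (hwbar : wbar = ∑ p : P, a p • vhat p) :
    f wbar - f wstar ≤ (M / 2) * (∑ p : P, |a p|) ^ 2 * δ ^ 2 :=
  perturbed_expansion_excess_loss_general M hM f G wstar hsmooth hstat a v vhat δ herr hwstar wbar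
    hwbar
end

section
/- Let H be a real inner product space, M ≥ 0, T ≥ 1, w* ∈ H, and for each t ∈ Fin T let f t : H → ℝ and G t : H → H satisfy, for all a, b ∈ H, f t b ≤ f t a + ⟪G t a, b − a⟫ + (M/2)·‖b − a‖², with G t w* = 0. Let P be a finite index set, a : P → ℝ, δ ≥ 0, and v, v̂ : P → H with ‖v̂ p − v p‖ ≤ δ for all p. If w* = Σ_p (a p)•(v p) and w̄* = Σ_p (a p)•(v̂ p), then Σ_{t} (f t w̄* − f t w*) ≤ (M/2)·T·(Σ_p |a p|)²·δ². (Paper's Theorem 8: the cumulative excess loss over T rounds of the random-Fourier-approximated comparator w̄* relative to the optimal comparator w* is at most (M/2)·T·‖w*‖₁²·δ², when the per-round kernel section errors are at most δ.) -/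
open scoped RealInnerProductSpace BigOperators

/-!
At a stationary point `w*` the smoothness upper bound loses its linear term, so each round's excess
loss is at most `(M/2)‖w̄* - w*‖²`. Since `w̄* - w* = Σ_p a_p (k̂_p - k_p)`, the triangle
inequality gives `‖w̄* - w*‖ ≤ ‖w*‖₁ δ`; summing over the `T` rounds gives the bound.
-/

theorem norm_sum_smul_sub_sum_smul_le {E ι : Type*} [SeminormedAddCommGroup E] [NormedSpace ℝ E]
    (s : Finset ι) (a : ι → ℝ) (u v : ι → E) {δ : ℝ} (h : ∀ i ∈ s, ‖u i - v i‖ ≤ δ) :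
    ‖∑ i ∈ s, a i • u i - ∑ i ∈ s, a i • v i‖ ≤ (∑ i ∈ s, |a i|) * δ := by
  rw [← Finset.sum_sub_distrib, Finset.sum_mul]
  calc ‖∑ i ∈ s, (a i • u i - a i • v i)‖
      ≤ ∑ i ∈ s, ‖a i • (u i - v i)‖ := by simpa only [smul_sub] using norm_sum_le _ _
    _ ≤ ∑ i ∈ s, |a i| * δ := Finset.sum_le_sum fun i hi => by
        rw [norm_smul, Real.norm_eq_abs]
        exact mul_le_mul_of_nonneg_left (h i hi) (abs_nonneg _)

theorem sub_le_of_upper_quadratic_bound_of_grad_eq_zero {E : Type*} [SeminormedAddCommGroup E]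
    [InnerProductSpace ℝ E] {f : E → ℝ} {G : E → E} {M r : ℝ} (hM : 0 ≤ M)
    (hsmooth : ∀ a b, f b ≤ f a + ⟪G a, b - a⟫ + (M / 2) * ‖b - a‖ ^ 2)
    {x y : E} (hx : G x = 0) (hyx : ‖y - x‖ ≤ r) :
    f y - f x ≤ (M / 2) * r ^ 2 := by
  have hquad := hsmooth x y
  rw [hx, inner_zero_left, add_zero] at hquad
  have hsq : ‖y - x‖ ^ 2 ≤ r ^ 2 := pow_le_pow_left₀ (norm_nonneg _) hyx 2
  nlinarith

theorem rff_comparator_cumulative_excess_loss_general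
    {H : Type*} [NormedAddCommGroup H] [InnerProductSpace ℝ H]
    (M : ℝ) (hM : 0 ≤ M) (T : ℕ) (wstar : H)
    (f : Fin T → H → ℝ) (G : Fin T → H → H)
    (hsmooth : ∀ (t : Fin T) (a b : H),
      f t b ≤ f t a + ⟪G t a, b - a⟫ + (M / 2) * ‖b - a‖ ^ 2)
    (hstat : ∀ t : Fin T, G t wstar = 0)
    {P : Type*} [Fintype P] (a : P → ℝ)
    (δ : ℝ) (v vhat : P → H)
    (herr : ∀ p : P, ‖vhat p - v p‖ ≤ δ)
    (hwstar : wstar = ∑ p : P, a p • v p)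
    (wbar : H) (hwbar : wbar = ∑ p : P, a p • vhat p) :
    ∑ t : Fin T, (f t wbar - f t wstar) ≤
      (M / 2) * (T : ℝ) * (∑ p : P, |a p|) ^ 2 * δ ^ 2 := by
  have hdist : ‖wbar - wstar‖ ≤ (∑ p : P, |a p|) * δ := by
    rw [hwbar, hwstar]
    exact norm_sum_smul_sub_sum_smul_le _ a vhat v fun p _ => herr p
  calc ∑ t : Fin T, (f t wbar - f t wstar)
      ≤ ∑ _t : Fin T, (M / 2) * ((∑ p : P, |a p|) * δ) ^ 2 :=
        Finset.sum_le_sum fun t _ =>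
          sub_le_of_upper_quadratic_bound_of_grad_eq_zero hM (hsmooth t) (hstat t) hdist
    _ = (M / 2) * (T : ℝ) * (∑ p : P, |a p|) ^ 2 * δ ^ 2 := by
        rw [Finset.sum_const, Finset.card_univ, Fintype.card_fin, nsmul_eq_mul]
        ring

/-- Paper's Theorem 8: the cumulative excess loss over `T` rounds of the
random-Fourier-approximated comparator `w̄*` relative to the optimal comparator `w*`
is at most `(M/2)·T·‖w*‖₁²·δ²`, when the per-round kernel section errors are at
most `δ`. -/
theorem rff_comparator_cumulative_excess_loss
    {H : Type*} [NormedAddCommGroup H] [InnerProductSpace ℝ H]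
    (M : ℝ) (hM : 0 ≤ M) (T : ℕ) (hT : 1 ≤ T) (wstar : H)
    (f : Fin T → H → ℝ) (G : Fin T → H → H)
    (hsmooth : ∀ (t : Fin T) (a b : H),
      f t b ≤ f t a + ⟪G t a, b - a⟫ + (M / 2) * ‖b - a‖ ^ 2)
    (hstat : ∀ t : Fin T, G t wstar = 0)
    {P : Type*} [Fintype P] (a : P → ℝ)
    (δ : ℝ) (hδ : 0 ≤ δ) (v vhat : P → H)
    (herr : ∀ p : P, ‖vhat p - v p‖ ≤ δ)
    (hwstar : wstar = ∑ p : P, a p • v p)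
    (wbar : H) (hwbar : wbar = ∑ p : P, a p • vhat p) :
    ∑ t : Fin T, (f t wbar - f t wstar) ≤
      (M / 2) * (T : ℝ) * (∑ p : P, |a p|) ^ 2 * δ ^ 2 :=
  rff_comparator_cumulative_excess_loss_general M hM T wstar f G hsmooth hstat a δ v vhat herr
    hwstar wbar hwbar
end
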